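/- arXiv:1304.2335 — 2 statements merged into one kernel-verified Lean document; each statement's English description precedes it below -/
import Mathlib

section
/- If an exact functor F : 𝒞 → 𝒟 between triangulated categories closed under small coproducts commutes with arbitrary coproducts, then for any class C′ ⊂ Ob 𝒞 the image under F of the big extension-closure of C′ is contained in the big extension-closure of F(C′) in 𝒟. -/
open CategoryTheory CategoryTheory.Limits CategoryTheory.Pretriangulated ZeroObject

universe v u u₂

variable {C : Type u} [Category.{v} C] [Preadditive C] [HasZeroObject C]
  [HasShift C ℤ] [∀ n : ℤ, (shiftFunctor C n).Additive] [Pretriangulated C]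

/-- The map `⊕ 1 − ⊕ φᵢ : ∐ Yᵢ ⟶ ∐ Yᵢ` whose cone is the homotopy colimit. -/
noncomputable def hocolimMap (Y : ℕ → C) (φ : ∀ i, Y i ⟶ Y (i + 1)) [HasCoproduct Y] :
    (∐ Y) ⟶ ∐ Y :=
  Sigma.desc fun i => Sigma.ι Y i - φ i ≫ Sigma.ι Y (i + 1)

/-- `H` is a homotopy colimit of the sequence `(Y, φ)` if it is a cone of `hocolimMap Y φ`. -/
def IsHocolim (Y : ℕ → C) (φ : ∀ i, Y i ⟶ Y (i + 1)) [HasCoproduct Y] (H : C) : Prop :=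
  ∃ (ι' : (∐ Y) ⟶ H) (π : H ⟶ (∐ Y)⟦(1 : ℤ)⟧),
    Triangle.mk (hocolimMap Y φ) ι' π ∈ distTriang C

/-- `Z` is a cone of the morphism `f`. -/
def IsConeOf {A B : C} (f : A ⟶ B) (Z : C) : Prop :=
  ∃ (g : B ⟶ Z) (h : Z ⟶ A⟦(1 : ℤ)⟧), Triangle.mk f g h ∈ distTriang C

/-- A class of objects is strongly extension-closed if it contains `0` and contains all
homotopy colimits of sequences whose first term and all cones of connecting maps lie
in the class. -/
def IsStronglyExtClosed [HasCountableCoproducts C] (P : Set C) : Prop :=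
  (0 : C) ∈ P ∧
    ∀ (Y : ℕ → C) (φ : ∀ i, Y i ⟶ Y (i + 1)) (H : C), IsHocolim Y φ H →
      Y 0 ∈ P → (∀ i, ∃ Z, IsConeOf (φ i) Z ∧ Z ∈ P) → H ∈ P

/-- `X` is a retract of `Y`. -/
def IsRetractOf (X Y : C) : Prop :=
  ∃ (i : X ⟶ Y) (r : Y ⟶ X), i ≫ r = 𝟙 X

/-- A class of objects is closed under retracts. -/
def IsRetractClosed (P : Set C) : Prop :=
  ∀ X Y : C, IsRetractOf X Y → Y ∈ P → X ∈ P

/-- A class of objects is closed under arbitrary small coproducts. -/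
def IsCoprodClosed [HasCoproducts.{v} C] (P : Set C) : Prop :=
  ∀ (ι : Type v) (Z : ι → C), (∀ i, Z i ∈ P) → (∐ Z) ∈ P

/-- The big extension-closure of a class `C'`: the smallest strongly extension-closed,
retract-closed class containing `C'` and closed under arbitrary small coproducts. -/
def bigExtClosure [HasCoproducts.{v} C] (C' : Set C) : Set C :=
  ⋂₀ {P : Set C | C' ⊆ P ∧ IsStronglyExtClosed P ∧ IsRetractClosed P ∧ IsCoprodClosed P}

/-! The preimage under `F` of the big extension-closure of `F(C')` contains `C'` and inherits
every closure property from its image: `F` sends cones to cones and, commuting with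
coproducts, sends homotopy colimits to homotopy colimits and coproducts to coproducts (up to
isomorphism, which retract-closure absorbs). Minimality of `bigExtClosure C'` concludes. -/

section Category

variable {C : Type u} [Category.{v} C] {D : Type u₂} [Category.{v} D] (F : C ⥤ D)

lemma IsRetractClosed.mem_of_iso {P : Set C} (hP : IsRetractClosed P) {X Y : C} (e : X ≅ Y)
    (hY : Y ∈ P) : X ∈ P :=
  hP X Y ⟨e.hom, e.inv, e.hom_inv_id⟩ hY

lemma IsRetractOf.map {X Y : C} (h : IsRetractOf X Y) : IsRetractOf (F.obj X) (F.obj Y) :=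
  let ⟨i, r, hir⟩ := h
  ⟨F.map i, F.map r, by rw [← F.map_comp, hir, F.map_id]⟩

lemma IsRetractClosed.preimage {P : Set D} (hP : IsRetractClosed P) :
    IsRetractClosed (F.obj ⁻¹' P) :=
  fun _ _ hXY hY => hP _ _ (hXY.map F) hY

lemma IsCoprodClosed.preimage [HasCoproducts.{v} C] [HasCoproducts.{v} D]
    (hF : ∀ ι : Type v, PreservesColimitsOfShape (Discrete ι) F) {P : Set D}
    (hP : IsCoprodClosed P) (hret : IsRetractClosed P) : IsCoprodClosed (F.obj ⁻¹' P) :=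
  fun ι Z hZ =>
    have := hF ι
    hret.mem_of_iso (PreservesCoproduct.iso F Z) (hP ι _ hZ)

lemma hocolimMap_comp_sigmaComparison [Preadditive C] [Preadditive D] [F.Additive]
    (Y : ℕ → C) (φ : ∀ i, Y i ⟶ Y (i + 1)) [HasCoproduct Y]
    [HasCoproduct fun i => F.obj (Y i)] :
    hocolimMap (fun i => F.obj (Y i)) (fun i => F.map (φ i)) ≫ sigmaComparison F Y =
      sigmaComparison F Y ≫ F.map (hocolimMap Y φ) := by
  ext i
  simp only [hocolimMap, Sigma.ι_desc_assoc, ι_comp_sigmaComparison_assoc, ← F.map_comp,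
    Sigma.ι_desc, Preadditive.sub_comp, F.map_sub, Category.assoc, ι_comp_sigmaComparison]

end Category

section Closure

variable [HasCoproducts.{v} C] (C' : Set C)

lemma subset_bigExtClosure : C' ⊆ bigExtClosure C' :=
  fun _ hx _ hP => hP.1 hx

lemma bigExtClosure_subset {P : Set C} (hC' : C' ⊆ P) (hext : IsStronglyExtClosed P)
    (hret : IsRetractClosed P) (hcoprod : IsCoprodClosed P) : bigExtClosure C' ⊆ P :=
  Set.sInter_subset_of_mem ⟨hC', hext, hret, hcoprod⟩

lemma isStronglyExtClosed_bigExtClosure : IsStronglyExtClosed (bigExtClosure C') :=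
  ⟨fun _ hP => hP.2.1.1, fun Y φ H hH h0 hcone P hP =>
    hP.2.1.2 Y φ H hH (h0 P hP) fun i =>
      let ⟨Z, hZ, hZP⟩ := hcone i
      ⟨Z, hZ, hZP P hP⟩⟩

lemma isRetractClosed_bigExtClosure : IsRetractClosed (bigExtClosure C') :=
  fun X Y hXY hY P hP => hP.2.2.1 X Y hXY (hY P hP)

lemma isCoprodClosed_bigExtClosure : IsCoprodClosed (bigExtClosure C') :=
  fun ι Z hZ P hP => hP.2.2.2 ι Z fun i => hZ i P hP

end Closure

lemma IsConeOf.of_arrow_iso {A B A' B' Z : C} {f : A ⟶ B} {f' : A' ⟶ B'} (e₁ : A' ≅ A)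
    (e₂ : B' ≅ B) (w : f' ≫ e₂.hom = e₁.hom ≫ f) (h : IsConeOf f Z) : IsConeOf f' Z := by
  obtain ⟨g, h, hT⟩ := h
  refine ⟨e₂.hom ≫ g, h ≫ e₁.inv⟦(1 : ℤ)⟧', isomorphic_distinguished _ hT _ ?_⟩
  refine Triangle.isoMk _ _ e₁ e₂ (Iso.refl Z) w (Category.comp_id _) ?_
  show (h ≫ e₁.inv⟦(1 : ℤ)⟧') ≫ e₁.hom⟦(1 : ℤ)⟧' = 𝟙 Z ≫ h
  simp [← Functor.map_comp]

section Triangulated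

variable {D : Type u₂} [Category.{v} D] [Preadditive D] [HasZeroObject D]
  [HasShift D ℤ] [∀ n : ℤ, (shiftFunctor D n).Additive] [Pretriangulated D]
  (F : C ⥤ D) [F.CommShift ℤ] [F.IsTriangulated]

lemma IsConeOf.map {A B Z : C} {f : A ⟶ B} (h : IsConeOf f Z) :
    IsConeOf (F.map f) (F.obj Z) :=
  let ⟨g, h, hT⟩ := h
  ⟨F.map g, F.map h ≫ (F.commShiftIso (1 : ℤ)).hom.app A, F.map_distinguished _ hT⟩

lemma IsHocolim.map {Y : ℕ → C} {φ : ∀ i, Y i ⟶ Y (i + 1)} [HasCoproduct Y]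
    [HasCoproduct fun i => F.obj (Y i)] [PreservesColimit (Discrete.functor Y) F] {H : C}
    (h : IsHocolim Y φ H) :
    IsHocolim (fun i => F.obj (Y i)) (fun i => F.map (φ i)) (F.obj H) :=
  IsConeOf.of_arrow_iso (asIso (sigmaComparison F Y)) (asIso (sigmaComparison F Y))
    (hocolimMap_comp_sigmaComparison F Y φ) (IsConeOf.map F h)

lemma IsStronglyExtClosed.preimage [HasCountableCoproducts C] [HasCountableCoproducts D]
    [PreservesColimitsOfShape (Discrete ℕ) F] {P : Set D} (hP : IsStronglyExtClosed P)
    (hret : IsRetractClosed P) : IsStronglyExtClosed (F.obj ⁻¹' P) := by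
  refine ⟨hret.mem_of_iso ((F.map_isZero (isZero_zero C)).iso (isZero_zero D)) hP.1, ?_⟩
  intro Y φ H hH h0 hcone
  refine hP.2 _ _ _ (hH.map F) h0 fun i => ?_
  obtain ⟨Z, hZ, hZP⟩ := hcone i
  exact ⟨F.obj Z, hZ.map F, hZP⟩

end Triangulated

/-- If an exact functor `F : C ⥤ D` between triangulated categories closed under small
coproducts commutes with arbitrary coproducts, then the image under `F` of the big
extension-closure of a class `C'` is contained in the big extension-closure of `F(C')`. -/
theorem stmt9 [HasCoproducts.{v} C]
    {D : Type u₂} [Category.{v} D] [Preadditive D] [HasZeroObject D]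
    [HasShift D ℤ] [∀ n : ℤ, (shiftFunctor D n).Additive] [Pretriangulated D]
    [HasCoproducts.{v} D]
    (F : C ⥤ D) [F.CommShift ℤ] [F.IsTriangulated]
    (hF : ∀ ι : Type v, PreservesColimitsOfShape (Discrete ι) F)
    (hF' : PreservesColimitsOfShape (Discrete ℕ) F)
    (C' : Set C) :
    ∀ X ∈ bigExtClosure C', F.obj X ∈ bigExtClosure (F.obj '' C') := by
  have := hF'
  have hret := isRetractClosed_bigExtClosure (F.obj '' C')
  exact bigExtClosure_subset C' (fun X hX => subset_bigExtClosure _ ⟨X, hX, rfl⟩)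
    ((isStronglyExtClosed_bigExtClosure _).preimage F hret) (hret.preimage F)
    ((isCoprodClosed_bigExtClosure _).preimage F hF hret)
end

section
/- Let F : 𝒞 ⇄ 𝒟 : G be adjoint exact functors between triangulated categories with weight structures w on 𝒞 and v on 𝒟. Then F is left weight-exact (F(𝒞_{w≤0}) ⊂ 𝒟_{v≤0}) if and only if G is right weight-exact (G(𝒟_{v≥0}) ⊂ 𝒞_{w≥0}). -/
open CategoryTheory CategoryTheory.Limits CategoryTheory.Pretriangulated ZeroObject

universe v u v₂ u₂

/-- A weight structure (homological convention) on a triangulated category: a pair of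
additive retract-closed classes `(le, ge)` (playing the roles of `C_{w≤0}` and `C_{w≥0}`)
satisfying shift-stability `C_{w≤0} ⊆ C_{w≤0}[1]`, `C_{w≥0}[1] ⊆ C_{w≥0}`, the
orthogonality `Hom(C_{w≤0}, C_{w≥0}[1]) = 0`, and the existence of weight decompositions
`B → M → A → B[1]` with `B ∈ C_{w≤0}` and `A ∈ C_{w≥0}[1]`. -/
structure WeightStructure (C : Type u) [Category.{v} C] [Preadditive C] [HasZeroObject C]
    [HasBinaryBiproducts C] [HasShift C ℤ] [∀ n : ℤ, (shiftFunctor C n).Additive]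
    [Pretriangulated C] where
  le : Set C
  ge : Set C
  le_zero : (0 : C) ∈ le
  ge_zero : (0 : C) ∈ ge
  le_retract : ∀ X Y : C, (∃ (i : X ⟶ Y) (r : Y ⟶ X), i ≫ r = 𝟙 X) → Y ∈ le → X ∈ le
  ge_retract : ∀ X Y : C, (∃ (i : X ⟶ Y) (r : Y ⟶ X), i ≫ r = 𝟙 X) → Y ∈ ge → X ∈ ge
  le_add : ∀ X Y : C, X ∈ le → Y ∈ le → (X ⊞ Y) ∈ le
  ge_add : ∀ X Y : C, X ∈ ge → Y ∈ ge → (X ⊞ Y) ∈ ge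
  le_shift : ∀ X : C, X ∈ le → X⟦(-1 : ℤ)⟧ ∈ le
  ge_shift : ∀ X : C, X ∈ ge → X⟦(1 : ℤ)⟧ ∈ ge
  orth : ∀ X ∈ le, ∀ Y ∈ ge, ∀ f : X ⟶ Y⟦(1 : ℤ)⟧, f = 0
  decomp : ∀ M : C, ∃ (B A : C) (f : B ⟶ M) (g : M ⟶ A) (h : A ⟶ B⟦(1 : ℤ)⟧),
    B ∈ le ∧ A⟦(-1 : ℤ)⟧ ∈ ge ∧ Triangle.mk f g h ∈ distTriang C

variable {C : Type u} [Category.{v} C] [Preadditive C] [HasZeroObject C]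
  [HasBinaryBiproducts C] [HasShift C ℤ] [∀ n : ℤ, (shiftFunctor C n).Additive]
  [Pretriangulated C]

/-! Both conditions say that `Hom(F X, Y⟦1⟧) = 0` for all `X ∈ C_{w≤0}` and `Y ∈ D_{v≥0}`: the
classes of a weight structure determine each other by orthogonality (a weight decomposition of an
object orthogonal to one side splits), and the adjunction together with `G (Y⟦1⟧) ≅ (G Y)⟦1⟧`
identifies `Hom(F X, Y⟦1⟧)` with `Hom(X, (G Y)⟦1⟧)`. -/

namespace WeightStructure

variable (w : WeightStructure C)

lemma mem_le_of_retract {X Y : C} (h : Retract X Y) (hY : Y ∈ w.le) : X ∈ w.le :=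
  w.le_retract X Y ⟨h.i, h.r, h.retract⟩ hY

lemma mem_ge_of_retract {X Y : C} (h : Retract X Y) (hY : Y ∈ w.ge) : X ∈ w.ge :=
  w.ge_retract X Y ⟨h.i, h.r, h.retract⟩ hY

lemma mem_le_iff_forall_eq_zero (X : C) :
    X ∈ w.le ↔ ∀ Y ∈ w.ge, ∀ f : X ⟶ Y⟦(1 : ℤ)⟧, f = 0 := by
  refine ⟨fun hX => w.orth X hX, fun hX => ?_⟩
  obtain ⟨B, A, f, g, h, hB, hA, hT⟩ := w.decomp X
  let e : A ≅ (A⟦(-1 : ℤ)⟧)⟦(1 : ℤ)⟧ :=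
    ((shiftFunctorCompIsoId C (-1 : ℤ) 1 (by norm_num)).app A).symm
  have hg : g = 0 := (cancel_mono e.hom).1 (by rw [hX _ hA (g ≫ e.hom), zero_comp])
  obtain ⟨s, hs⟩ := Triangle.coyoneda_exact₂ _ hT (𝟙 X) <| by
    change 𝟙 X ≫ g = 0
    rw [hg, comp_zero]
  exact w.mem_le_of_retract ⟨s, f, hs.symm⟩ hB

lemma mem_ge_iff_forall_eq_zero (Y : C) :
    Y ∈ w.ge ↔ ∀ X ∈ w.le, ∀ f : X ⟶ Y⟦(1 : ℤ)⟧, f = 0 := by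
  refine ⟨fun hY X hX => w.orth X hX Y hY, fun hY => ?_⟩
  obtain ⟨B, A, f, g, h, hB, hA, hT⟩ := w.decomp (Y⟦(1 : ℤ)⟧)
  obtain ⟨r, hr⟩ := Triangle.yoneda_exact₂ _ hT (𝟙 _) <| by
    change f ≫ 𝟙 _ = 0
    rw [hY B hB f, zero_comp]
  let e : Y ≅ (Y⟦(1 : ℤ)⟧)⟦(-1 : ℤ)⟧ :=
    ((shiftFunctorCompIsoId C (1 : ℤ) (-1) (by norm_num)).app Y).symm
  exact w.mem_ge_of_retract (e.retract.trans ((Retract.mk g r hr.symm).map _)) hA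

end WeightStructure

lemma CategoryTheory.Adjunction.forall_eq_zero_shift_iff {C₀ : Type*} {D₀ : Type*}
    [Category C₀] [Category D₀] [Preadditive C₀] [Preadditive D₀] [HasShift C₀ ℤ] [HasShift D₀ ℤ]
    {F : C₀ ⥤ D₀} {G : D₀ ⥤ C₀} [G.CommShift ℤ] (adj : F ⊣ G) (n : ℤ) (X : C₀) (Y : D₀) :
    (∀ f : F.obj X ⟶ Y⟦n⟧, f = 0) ↔ ∀ g : X ⟶ (G.obj Y)⟦n⟧, g = 0 := by
  simp only [← subsingleton_iff_forall_eq]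
  exact ((adj.homEquiv X _).trans
    (Iso.homCongr (Iso.refl X) ((G.commShiftIso n).app Y))).subsingleton_congr

/-- For adjoint exact functors `F ⊣ G` between triangulated categories with weight
structures, `F` is left weight-exact iff `G` is right weight-exact. -/
theorem stmt13 {D : Type u₂} [Category.{v₂} D] [Preadditive D] [HasZeroObject D]
    [HasBinaryBiproducts D] [HasShift D ℤ] [∀ n : ℤ, (shiftFunctor D n).Additive]
    [Pretriangulated D]
    (wC : WeightStructure C) (wD : WeightStructure D)
    (F : C ⥤ D) (G : D ⥤ C) [F.CommShift ℤ] [F.IsTriangulated]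
    [G.CommShift ℤ] [G.IsTriangulated] (adj : F ⊣ G) :
    (∀ X ∈ wC.le, F.obj X ∈ wD.le) ↔ (∀ Y ∈ wD.ge, G.obj Y ∈ wC.ge) := by
  simp only [wD.mem_le_iff_forall_eq_zero, wC.mem_ge_iff_forall_eq_zero,
    adj.forall_eq_zero_shift_iff]
  exact ⟨fun h Y hY X hX => h X hX Y hY, fun h X hX Y hY => h Y hY X hX⟩
end
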